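/- arXiv:2001.02428 — 4 statements merged into one kernel-verified Lean document; each statement's English description precedes it below -/
import Mathlib

section
/- Let X be a compact metric space, n a positive integer, and E a real normed vector space. Let σ : X × ℝⁿ → E be jointly continuous and bounded, and assume: (a) there is M ≥ 0 such that for every ξ ∈ ℝⁿ the map x ↦ σ(x,ξ) is M-Lipschitz; (b) for every x ∈ X the map ξ ↦ σ(x,ξ) is differentiable and there is C ≥ 0 such that ‖D_ξσ(x,ξ)‖ ≤ C·(1+‖ξ‖)⁻¹ for all (x,ξ). Let q : X × ℝⁿ → ℝ be jointly continuous with q(x,ξ) ≥ 0 and q(x,t·ξ) = t²·q(x,ξ) for all t ∈ ℝ, x ∈ X, ξ ∈ ℝⁿ. Then the following are equivalent: (1) for every ε > 0 there exists R > 0 such that ‖σ(x,ξ)‖ ≤ ε whenever q(x,ξ) = 0 and ‖ξ‖ ≥ R (i.e. the restriction of σ to the zero set of q vanishes at infinity); (2) for every ε > 0 there exists c > 0 such that ‖σ(x,ξ)‖ ≤ c·(1+q(x,ξ))/(1+‖ξ‖²) + ε for all (x,ξ) ∈ X × ℝⁿ. -/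
set_option maxHeartbeats 1000000


/-- Kasparov's Definition–Lemma 6.2 (Lemma 2.4 of the paper), abstract form:
for a bounded continuous symbol `σ` on `X × ℝⁿ` with uniformly Lipschitz base
dependence and fibre derivative bounded by `C (1 + ‖ξ‖)⁻¹`, and a nonnegative
continuous fibrewise 2-homogeneous function `q` (modelling the transverse
directions to the orbits), vanishing at infinity of `σ` on the zero set of `q`
is equivalent to the estimate `‖σ(x,ξ)‖ ≤ c (1 + q(x,ξ))/(1 + ‖ξ‖²) + ε`. -/
theorem stmt_0
    {X : Type*} [MetricSpace X] [CompactSpace X]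
    {n : ℕ} (hn : 0 < n)
    {E : Type*} [NormedAddCommGroup E] [NormedSpace ℝ E]
    (σ : X × EuclideanSpace ℝ (Fin n) → E)
    (hσcont : Continuous σ)
    (hσbdd : ∃ B : ℝ, ∀ p, ‖σ p‖ ≤ B)
    (hLip : ∃ M : NNReal, ∀ ξ : EuclideanSpace ℝ (Fin n),
      LipschitzWith M (fun x : X => σ (x, ξ)))
    (hdiff : ∀ x : X, Differentiable ℝ (fun ξ : EuclideanSpace ℝ (Fin n) => σ (x, ξ)))
    (hderiv : ∃ C : ℝ, 0 ≤ C ∧ ∀ (x : X) (ξ : EuclideanSpace ℝ (Fin n)),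
      ‖fderiv ℝ (fun ξ' : EuclideanSpace ℝ (Fin n) => σ (x, ξ')) ξ‖ ≤ C * (1 + ‖ξ‖)⁻¹)
    (q : X × EuclideanSpace ℝ (Fin n) → ℝ)
    (hqcont : Continuous q)
    (hqnonneg : ∀ p, 0 ≤ q p)
    (hqhomog : ∀ (t : ℝ) (x : X) (ξ : EuclideanSpace ℝ (Fin n)),
      q (x, t • ξ) = t ^ 2 * q (x, ξ)) :
    (∀ ε > (0 : ℝ), ∃ R > (0 : ℝ), ∀ (x : X) (ξ : EuclideanSpace ℝ (Fin n)),
        q (x, ξ) = 0 → R ≤ ‖ξ‖ → ‖σ (x, ξ)‖ ≤ ε) ↔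
      (∀ ε > (0 : ℝ), ∃ c > (0 : ℝ), ∀ (x : X) (ξ : EuclideanSpace ℝ (Fin n)),
        ‖σ (x, ξ)‖ ≤ c * (1 + q (x, ξ)) / (1 + ‖ξ‖ ^ 2) + ε) := by
  classical
  obtain ⟨B, hB⟩ := hσbdd
  obtain ⟨M, hM⟩ := hLip
  obtain ⟨C, hC0, hC⟩ := hderiv
  constructor
  · -- (1) → (2)
    intro h1 ε hε
    by_contra hcon
    push_neg at hcon
    set B' : ℝ := max B 1 with hB'def
    have hB'pos : (0:ℝ) < B' := lt_of_lt_of_le one_pos (le_max_right _ _)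
    have hBle : ∀ p, ‖σ p‖ ≤ B' := fun p => (hB p).trans (le_max_left _ _)
    have hcon' : ∀ k : ℕ, ∃ x ξ,
        (B' * ((k:ℝ)+1)) * (1 + q (x, ξ)) / (1 + ‖ξ‖^2) + ε < ‖σ (x, ξ)‖ := by
      intro k
      obtain ⟨x, ξ, h⟩ := hcon (B' * ((k:ℝ)+1)) (by positivity)
      exact ⟨x, ξ, h⟩
    choose x ξ hxξ using hcon'
    set r : ℕ → ℝ := fun k => ‖ξ k‖ with hrdef
    have hden : ∀ k, (0:ℝ) < 1 + r k ^ 2 := fun k => by positivity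
    have hkey : ∀ k : ℕ, ((k:ℝ)+1) * (1 + q (x k, ξ k)) < 1 + r k ^ 2 := by
      intro k
      have h := hxξ k
      have hb := hBle (x k, ξ k)
      have h2 : B' * ((k:ℝ)+1) * (1 + q (x k, ξ k)) / (1 + r k ^ 2) < B' := by
        have : B' * ((k:ℝ)+1) * (1 + q (x k, ξ k)) / (1 + r k ^ 2) + ε < B' + ε := by
          calc B' * ((k:ℝ)+1) * (1 + q (x k, ξ k)) / (1 + r k ^ 2) + ε
              < ‖σ (x k, ξ k)‖ := h
            _ ≤ B' := hb
            _ < B' + ε := by linarith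
        linarith
      have h3 := (div_lt_iff₀ (hden k)).mp h2
      have hq := hqnonneg (x k, ξ k)
      nlinarith [hB'pos, Nat.cast_nonneg (α := ℝ) k]
    have hrk : ∀ k : ℕ, (k:ℝ) < r k ^ 2 := by
      intro k
      have h := hkey k
      have hq := hqnonneg (x k, ξ k)
      nlinarith [Nat.cast_nonneg (α := ℝ) k]
    have hrpos : ∀ k, 0 < r k := by
      intro k
      have h := hrk k
      have h0 : (0:ℝ) ≤ r k := norm_nonneg _
      nlinarith [Nat.cast_nonneg (α := ℝ) k]
    set η : ℕ → EuclideanSpace ℝ (Fin n) := fun k => (r k)⁻¹ • ξ k with hηdef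
    have hξη : ∀ k, ξ k = r k • η k := fun k =>
      (smul_inv_smul₀ (hrpos k).ne' (ξ k)).symm
    have hηnorm : ∀ k, ‖η k‖ = 1 := by
      intro k
      rw [hηdef]
      rw [norm_smul, Real.norm_eq_abs, abs_of_pos (inv_pos.mpr (hrpos k))]
      exact inv_mul_cancel₀ (hrpos k).ne'
    have hqη : ∀ k : ℕ, q (x k, η k) ≤ 1/((k:ℝ)+1) := by
      intro k
      have e : q (x k, ξ k) = r k ^ 2 * q (x k, η k) := by
        conv_lhs => rw [hξη k]
        rw [hqhomog]
      have h := hkey k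
      rw [e] at h
      rw [le_div_iff₀ (by positivity : (0:ℝ) < (k:ℝ)+1)]
      have hq := hqnonneg (x k, η k)
      nlinarith [hrk k, Nat.cast_nonneg (α := ℝ) k]
    -- compactness
    have hcpt : IsCompact ((Set.univ : Set X) ×ˢ
        Metric.sphere (0 : EuclideanSpace ℝ (Fin n)) 1) :=
      isCompact_univ.prod (isCompact_sphere 0 1)
    have hmemall : ∀ k, ((x k, η k) : X × EuclideanSpace ℝ (Fin n)) ∈
        (Set.univ : Set X) ×ˢ Metric.sphere (0 : EuclideanSpace ℝ (Fin n)) 1 := by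
      intro k
      refine ⟨Set.mem_univ _, ?_⟩
      simp [mem_sphere_iff_norm, hηnorm k]
    obtain ⟨⟨x₀, η₀⟩, hmem₀, φ, hφmono, hφlim⟩ :=
      hcpt.tendsto_subseq (x := fun k => (x k, η k)) hmemall
    have hη₀norm : ‖η₀‖ = 1 := by
      have := hmem₀.2
      simpa [mem_sphere_iff_norm] using this
    have hq₀ : q (x₀, η₀) = 0 := by
      have hA : Filter.Tendsto (fun k => q (x (φ k), η (φ k))) Filter.atTop
          (nhds (q (x₀, η₀))) := (hqcont.tendsto _).comp hφlim
      have hBnd : Filter.Tendsto (fun k => q (x (φ k), η (φ k))) Filter.atTop (nhds 0) := by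
        apply squeeze_zero (fun k => hqnonneg _) (g := fun k : ℕ => 1/((k:ℝ)+1))
        · intro k
          refine (hqη (φ k)).trans ?_
          apply one_div_le_one_div_of_le (by positivity)
          have : (k:ℝ) ≤ (φ k : ℝ) := Nat.cast_le.mpr (hφmono.le_apply)
          linarith
        · exact tendsto_one_div_add_atTop_nhds_zero_nat
      exact tendsto_nhds_unique hA hBnd
    obtain ⟨R, hRpos, hR⟩ := h1 (ε/3) (by linarith)
    set δ : ℝ := min (1/2) (min (ε/(3*((M:ℝ)+1))) (ε/(6*(C+1)))) with hδdef
    have hδpos : 0 < δ := by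
      have hM0 : (0:ℝ) ≤ (M:ℝ) := M.coe_nonneg
      apply lt_min (by norm_num)
      exact lt_min (by positivity) (by positivity)
    obtain ⟨N, hN⟩ := Metric.tendsto_atTop.mp hφlim δ hδpos
    set k₀ : ℕ := max N (Nat.ceil (R^2)) with hk₀def
    set j : ℕ := φ k₀ with hjdef
    have hdist := hN k₀ (le_max_left _ _)
    have hdists : dist (x j) x₀ < δ ∧ dist (η j) η₀ < δ := by
      rw [Function.comp_apply, Prod.dist_eq] at hdist
      exact max_lt_iff.mp hdist
    have hdx : dist (x j) x₀ < δ := hdists.1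
    have hdη : ‖η j - η₀‖ < δ := by rw [← dist_eq_norm]; exact hdists.2
    have hrR : R ≤ r j := by
      have h1' : R^2 ≤ (k₀:ℝ) :=
        le_trans (Nat.le_ceil _) (Nat.cast_le.mpr (le_max_right _ _))
      have h2' : (k₀:ℝ) ≤ (j:ℝ) := Nat.cast_le.mpr hφmono.le_apply
      have h3' : R^2 < r j ^ 2 := lt_of_le_of_lt (h1'.trans h2') (hrk j)
      exact le_of_lt (lt_of_pow_lt_pow_left₀ 2 (norm_nonneg _) h3')
    have hδhalf : δ ≤ 1/2 := min_le_left _ _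
    have hδM : δ ≤ ε/(3*((M:ℝ)+1)) := le_trans (min_le_right _ _) (min_le_left _ _)
    have hδC : δ ≤ ε/(6*(C+1)) := le_trans (min_le_right _ _) (min_le_right _ _)
    -- estimate 1: base Lipschitz
    have e1 : ‖σ (x j, ξ j) - σ (x₀, ξ j)‖ ≤ (M:ℝ) * δ := by
      have h := (hM (ξ j)).dist_le_mul (x j) x₀
      rw [dist_eq_norm] at h
      exact h.trans (mul_le_mul_of_nonneg_left hdx.le M.coe_nonneg)
    -- estimate 3: vanishing on zero set
    have e3 : ‖σ (x₀, r j • η₀)‖ ≤ ε/3 := by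
      apply hR
      · rw [hqhomog, hq₀]; ring
      · rw [norm_smul, Real.norm_eq_abs, abs_of_pos (hrpos j), hη₀norm, mul_one]
        exact hrR
    -- estimate 2: mean value along segment
    have hseg : ∀ ζ ∈ segment ℝ (ξ j) (r j • η₀), r j / 2 ≤ ‖ζ‖ := by
      rintro ζ ⟨a, b, ha, hb, hab, rfl⟩
      have hrw : a • ξ j + b • (r j • η₀) = r j • (η j + b • (η₀ - η j)) := by
        conv_lhs => rw [hξη j]
        rw [smul_smul, smul_smul, smul_add, smul_smul]
        have : a * r j = r j * (1 - b) := by rw [mul_comm]; congr 1; linarith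
        rw [this]
        module
      rw [hrw, norm_smul, Real.norm_eq_abs, abs_of_pos (hrpos j)]
      have hinner : 1/2 ≤ ‖η j + b • (η₀ - η j)‖ := by
        have htri : ‖η j‖ ≤ ‖η j + b • (η₀ - η j)‖ + ‖b • (η₀ - η j)‖ := by
          have := norm_sub_le (η j + b • (η₀ - η j)) (b • (η₀ - η j))
          simpa using this
        have hsm : ‖b • (η₀ - η j)‖ ≤ 1/2 := by
          rw [norm_smul, Real.norm_eq_abs, abs_of_nonneg hb]
          have h1' : ‖η₀ - η j‖ < δ := by
            rw [norm_sub_rev]; exact hdη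
          have : b * ‖η₀ - η j‖ ≤ 1 * δ :=
            mul_le_mul (by linarith) h1'.le (norm_nonneg _) one_pos.le
          linarith
        rw [hηnorm j] at htri
        linarith
      nlinarith [hrpos j]
    have hfd : ∀ ζ ∈ segment ℝ (ξ j) (r j • η₀),
        ‖fderiv ℝ (fun ξ' : EuclideanSpace ℝ (Fin n) => σ (x₀, ξ')) ζ‖ ≤ 2*C/(r j) := by
      intro ζ hζ
      refine (hC x₀ ζ).trans ?_
      have h1' : r j / 2 ≤ ‖ζ‖ := hseg ζ hζ
      have h2' : (1 + ‖ζ‖)⁻¹ ≤ (r j / 2)⁻¹ := by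
        apply inv_anti₀ (by have := hrpos j; linarith)
        have := norm_nonneg ζ
        linarith
      calc C * (1 + ‖ζ‖)⁻¹ ≤ C * (r j / 2)⁻¹ :=
            mul_le_mul_of_nonneg_left h2' hC0
        _ = 2*C/(r j) := by field_simp
    have e2 : ‖σ (x₀, r j • η₀) - σ (x₀, ξ j)‖ ≤ 2*C*δ := by
      have hmvt := (convex_segment (ξ j) (r j • η₀)).norm_image_sub_le_of_norm_fderiv_le
        (f := fun ξ' : EuclideanSpace ℝ (Fin n) => σ (x₀, ξ'))
        (fun ζ _ => (hdiff x₀) ζ) hfd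
        (left_mem_segment ℝ _ _) (right_mem_segment ℝ _ _)
      refine hmvt.trans ?_
      have hnd : ‖r j • η₀ - ξ j‖ = r j * ‖η₀ - η j‖ := by
        conv_lhs => rw [hξη j]
        rw [← smul_sub, norm_smul, Real.norm_eq_abs, abs_of_pos (hrpos j)]
      rw [hnd]
      have h1' : ‖η₀ - η j‖ < δ := by rw [norm_sub_rev]; exact hdη
      have : 2*C/(r j) * (r j * ‖η₀ - η j‖) = 2*C*‖η₀ - η j‖ := by
        field_simp [(hrpos j).ne']
      rw [this]
      have := mul_le_mul_of_nonneg_left h1'.le (by positivity : (0:ℝ) ≤ 2*C)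
      linarith
    -- combine
    have hMδ : (M:ℝ) * δ ≤ ε/3 := by
      have hM0 : (0:ℝ) ≤ (M:ℝ) := M.coe_nonneg
      have h1' : (M:ℝ) * δ ≤ (M:ℝ) * (ε/(3*((M:ℝ)+1))) :=
        mul_le_mul_of_nonneg_left hδM hM0
      have h2' : (M:ℝ) * (ε/(3*((M:ℝ)+1))) ≤ ε/3 := by
        rw [mul_div_assoc', div_le_div_iff₀ (by positivity) (by norm_num)]
        nlinarith
      linarith
    have hCδ : 2*C*δ ≤ ε/3 := by
      have h1' : 2*C*δ ≤ 2*C*(ε/(6*(C+1))) :=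
        mul_le_mul_of_nonneg_left hδC (by positivity)
      have h2' : 2*C*(ε/(6*(C+1))) ≤ ε/3 := by
        rw [mul_div_assoc', div_le_div_iff₀ (by positivity) (by norm_num)]
        nlinarith
      linarith
    have hfinal : ‖σ (x j, ξ j)‖ ≤ ε := by
      have htri : ‖σ (x j, ξ j)‖ ≤ ‖σ (x j, ξ j) - σ (x₀, ξ j)‖ +
          ‖σ (x₀, ξ j) - σ (x₀, r j • η₀)‖ + ‖σ (x₀, r j • η₀)‖ := by
        have := norm_add₃_le (a := σ (x j, ξ j) - σ (x₀, ξ j))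
          (b := σ (x₀, ξ j) - σ (x₀, r j • η₀)) (c := σ (x₀, r j • η₀))
        simpa using this
      have e2' : ‖σ (x₀, ξ j) - σ (x₀, r j • η₀)‖ ≤ 2*C*δ := by
        rw [norm_sub_rev]; exact e2
      linarith
    have hpos : 0 < (B' * ((j:ℝ)+1)) * (1 + q (x j, ξ j)) / (1 + r j ^ 2) := by
      have hq := hqnonneg (x j, ξ j)
      have := hden j
      positivity
    have := hxξ j
    linarith
  · -- (2) → (1)
    intro h2 ε hε
    obtain ⟨c, hc, hcest⟩ := h2 (ε/2) (by linarith)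
    refine ⟨Real.sqrt (2*c/ε) + 1, by positivity, ?_⟩
    intro x ξ hq0 hRξ
    have h := hcest x ξ
    rw [hq0] at h
    have hsq : 2*c/ε ≤ ‖ξ‖^2 := by
      have h1' : Real.sqrt (2*c/ε) ≤ ‖ξ‖ := by
        have := Real.sqrt_nonneg (2*c/ε)
        linarith
      have := Real.sq_sqrt (by positivity : (0:ℝ) ≤ 2*c/ε)
      nlinarith [Real.sqrt_nonneg (2*c/ε)]
    have h2c : 2*c ≤ ε * ‖ξ‖^2 := by
      rw [div_le_iff₀ hε] at hsq
      linarith [hsq]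
    have hfrac : c * (1 + 0) / (1 + ‖ξ‖^2) ≤ ε/2 := by
      rw [div_le_iff₀ (by positivity)]
      nlinarith
    linarith
end

section
/- Let G be a compact topological group equipped with its Haar probability measure μ, H a complex Hilbert space, U : G → B(H) a strongly continuous unitary representation, and π(φ)ξ = ∫_G φ(g) U(g)ξ dμ(g) for continuous φ. Let ρ : G → U(ℂⁿ) be a continuous unitary representation with standard orthonormal basis (e₁,…,eₙ) and matrix coefficients C_{v,w}(g) = ⟨v, ρ(g)w⟩. Then for every v ∈ ℂⁿ and η ∈ H, the family ζ_k := π(C_{e_k,v})η (k = 1,…,n) is invariant under ρ ⊗ U: for every h ∈ G and every k, Σ_{i=1}^{n} ⟨e_k, ρ(h)e_i⟩ · U(h)ζ_i = ζ_k. In other words, the average ∫_G (ρ(g) ⊗ U(g))(v ⊗ η) dμ(g) = Σ_k e_k ⊗ π(C_{e_k,v})η is a G-invariant vector. -/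
open MeasureTheory
open scoped ComplexInnerProductSpace

/-- The average `∫_G (ρ(g) ⊗ U(g))(v ⊗ η) dμ(g) = Σ_k e_k ⊗ π(C_{e_k,v})η` is a
`ρ ⊗ U`-invariant vector: the family `ζ_k = π(C_{e_k,v})η` satisfies
`Σᵢ ⟪e_k, ρ(h)eᵢ⟫ • U(h)ζᵢ = ζ_k` for all `h ∈ G`, where
`π(φ)ξ = ∫_G φ(g) U(g)ξ dμ(g)` and `C_{v,w}(g) = ⟪v, ρ(g)w⟫`. -/
theorem stmt_8
    {G : Type*} [Group G] [TopologicalSpace G] [IsTopologicalGroup G] [CompactSpace G]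
    [MeasurableSpace G] [BorelSpace G]
    (μ : Measure G) [μ.IsHaarMeasure] [IsProbabilityMeasure μ]
    {H : Type*} [NormedAddCommGroup H] [InnerProductSpace ℂ H]
    (U : G → H →L[ℂ] H)
    (hUone : U 1 = 1)
    (hUmul : ∀ g h : G, U (g * h) = (U g).comp (U h))
    (hUunitary : ∀ (g : G) (ξ η : H), ⟪U g ξ, U g η⟫ = ⟪ξ, η⟫)
    (hUcont : ∀ ξ : H, Continuous fun g : G => U g ξ)
    {n : ℕ}
    (ρ : G → EuclideanSpace ℂ (Fin n) →L[ℂ] EuclideanSpace ℂ (Fin n))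
    (hρone : ρ 1 = 1)
    (hρmul : ∀ g h : G, ρ (g * h) = (ρ g).comp (ρ h))
    (hρunitary : ∀ (g : G) (v w : EuclideanSpace ℂ (Fin n)),
      ⟪ρ g v, ρ g w⟫ = ⟪v, w⟫)
    (hρcont : ∀ v : EuclideanSpace ℂ (Fin n), Continuous fun g : G => ρ g v) :
    ∀ (v : EuclideanSpace ℂ (Fin n)) (η : H) (h : G) (k : Fin n),
      ∑ i : Fin n,
          ⟪(EuclideanSpace.single k 1 : EuclideanSpace ℂ (Fin n)),
              ρ h (EuclideanSpace.single i 1)⟫ •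
            U h (∫ g, ⟪(EuclideanSpace.single i 1 : EuclideanSpace ℂ (Fin n)),
                ρ g v⟫ • U g η ∂μ)
        = ∫ g, ⟪(EuclideanSpace.single k 1 : EuclideanSpace ℂ (Fin n)),
            ρ g v⟫ • U g η ∂μ := by
  intro v η h k
  by_cases hc : CompleteSpace H
  · -- integrability of the matrix-coefficient integrands
    have hInt : ∀ w : EuclideanSpace ℂ (Fin n),
        Integrable (fun g : G => (⟪w, ρ g v⟫ : ℂ) • U g η) μ := by
      intro w
      exact ((continuous_const.inner (hρcont v)).smul (hUcont η)).integrable_of_hasCompactSupport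
        (IsClosed.isCompact (isClosed_tsupport _))
    -- step 1: pull `U h` and the scalar inside each integral
    have step1 : ∀ i : Fin n,
        (⟪(EuclideanSpace.single k 1 : EuclideanSpace ℂ (Fin n)),
            ρ h (EuclideanSpace.single i 1)⟫ : ℂ) •
          U h (∫ g, (⟪(EuclideanSpace.single i 1 : EuclideanSpace ℂ (Fin n)),
              ρ g v⟫ : ℂ) • U g η ∂μ)
        = ∫ g, (⟪(EuclideanSpace.single k 1 : EuclideanSpace ℂ (Fin n)),
            ρ h (EuclideanSpace.single i 1)⟫ : ℂ) •
            ((⟪(EuclideanSpace.single i 1 : EuclideanSpace ℂ (Fin n)),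
              ρ g v⟫ : ℂ) • U h (U g η)) ∂μ := by
      intro i
      rw [← ContinuousLinearMap.integral_comp_comm (U h) (hInt _), ← integral_smul]
      congr 1
      ext g
      simp only [ContinuousLinearMap.map_smul]
    rw [Finset.sum_congr rfl fun i _ => step1 i]
    -- step 2: interchange sum and integral
    rw [← integral_finset_sum]
    swap
    · intro i _
      exact (continuous_const.smul ((continuous_const.inner (hρcont v)).smul
        ((U h).continuous.comp (hUcont η)))).integrable_of_hasCompactSupport
        (IsClosed.isCompact (isClosed_tsupport _))
    -- step 3: pointwise identity : the integrand equals `f (h * g)` where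
    -- `f g = ⟪e_k, ρ g v⟫ • U g η`
    have step3 : ∀ g : G,
        (∑ i : Fin n,
          (⟪(EuclideanSpace.single k 1 : EuclideanSpace ℂ (Fin n)),
            ρ h (EuclideanSpace.single i 1)⟫ : ℂ) •
            ((⟪(EuclideanSpace.single i 1 : EuclideanSpace ℂ (Fin n)),
              ρ g v⟫ : ℂ) • U h (U g η)))
        = (⟪(EuclideanSpace.single k 1 : EuclideanSpace ℂ (Fin n)),
            ρ (h * g) v⟫ : ℂ) • U (h * g) η := by
      intro g
      have hUhg : U (h * g) η = U h (U g η) := by rw [hUmul]; rfl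
      have hρhg : ρ (h * g) v = ρ h (ρ g v) := by rw [hρmul]; rfl
      -- `ρ h` preserves inner products against anything via `ρ h⁻¹`
      have hadj : ∀ w : EuclideanSpace ℂ (Fin n),
          (⟪(EuclideanSpace.single k 1 : EuclideanSpace ℂ (Fin n)), ρ h w⟫ : ℂ)
            = ⟪ρ h⁻¹ (EuclideanSpace.single k 1), w⟫ := by
        intro w
        have h1 : ρ h (ρ h⁻¹ (EuclideanSpace.single k 1))
            = (EuclideanSpace.single k 1 : EuclideanSpace ℂ (Fin n)) := by
          have : (ρ h).comp (ρ h⁻¹) = ρ 1 := by rw [← hρmul, mul_inv_cancel]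
          have := congrArg (fun T : EuclideanSpace ℂ (Fin n) →L[ℂ] _ =>
            T (EuclideanSpace.single k 1)) this
          simpa [hρone] using this
        calc (⟪(EuclideanSpace.single k 1 : EuclideanSpace ℂ (Fin n)), ρ h w⟫ : ℂ)
            = ⟪ρ h (ρ h⁻¹ (EuclideanSpace.single k 1)), ρ h w⟫ := by rw [h1]
          _ = ⟪ρ h⁻¹ (EuclideanSpace.single k 1), w⟫ := hρunitary h _ w
      -- expand via the orthonormal basis
      have hb := (EuclideanSpace.basisFun (Fin n) ℂ).sum_inner_mul_inner
        (ρ h⁻¹ (EuclideanSpace.single k 1)) (ρ g v)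
      simp only [EuclideanSpace.basisFun_apply] at hb
      have hinner : (⟪(EuclideanSpace.single k 1 : EuclideanSpace ℂ (Fin n)),
          ρ (h * g) v⟫ : ℂ)
          = ∑ i : Fin n,
            (⟪(EuclideanSpace.single k 1 : EuclideanSpace ℂ (Fin n)),
              ρ h (EuclideanSpace.single i 1)⟫ : ℂ) *
            (⟪(EuclideanSpace.single i 1 : EuclideanSpace ℂ (Fin n)), ρ g v⟫ : ℂ) := by
        rw [hρhg, hadj, ← hb]
        refine Finset.sum_congr rfl fun i _ => ?_
        rw [hadj]
      rw [hinner, hUhg, Finset.sum_smul]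
      refine Finset.sum_congr rfl fun i _ => ?_
      rw [smul_smul]
    rw [integral_congr_ae (Filter.Eventually.of_forall step3)]
    -- step 4: left invariance of the Haar measure
    exact integral_mul_left_eq_self
      (fun g : G => (⟪(EuclideanSpace.single k 1 : EuclideanSpace ℂ (Fin n)),
        ρ g v⟫ : ℂ) • U g η) h
  · -- the degenerate case: integrals in a non-complete space are zero
    have hz : ∀ w : EuclideanSpace ℂ (Fin n),
        (∫ g, (⟪w, ρ g v⟫ : ℂ) • U g η ∂μ) = 0 := by
      intro w
      simp [MeasureTheory.integral, hc]
    simp only [hz, map_zero, smul_zero, Finset.sum_const_zero]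
end

section
/- Let H be a complex Hilbert space and let T, S be bounded operators on H with T self-adjoint and T∘S = S∘T. Assume that for every ε > 0 there exist bounded self-adjoint operators Q, R₁, R₂ on H such that Q∘S is a compact operator, R₁ and R₂ are compact operators, and both T + Q + ε·id + R₁ and Q + ε·id + R₂ − T are positive operators (i.e. the operator inequalities −(Q + ε·id + R₁) ≤ T ≤ Q + ε·id + R₂ hold). Then T∘S*∘S is a compact operator (equivalently, S*∘T∘S is compact). -/
open ContinuousLinearMap

/-!
Put `X = S* T S = T S* S` and `B = S* S`. Conjugating the two operator inequalities by `S` gives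
`-(K₁ + ε B) ≤ X ≤ K₂ + ε B` with `Kᵢ = S* (Q + Rᵢ) S` compact, i.e. `-ε b ≤ x ≤ ε b` in the Calkin
algebra for every `ε`, so `x = 0`. Concretely, `P = X + K₁ + ε B` satisfies `0 ≤ P ≤ K + O(ε)` with
`K` compact; if `q` is the projection onto the orthocomplement of a finite-dimensional subspace
with `‖q K‖ ≤ ε`, then `‖q P q‖ = O(ε)` while `P - q P q` is compact. Hence `X` is a norm limit of
compact operators.
-/

theorem isCompactOperator_of_forall_exists_norm_sub_le {𝕜 E F : Type*}
    [NontriviallyNormedField 𝕜] [NormedAddCommGroup E] [NormedSpace 𝕜 E]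
    [NormedAddCommGroup F] [NormedSpace 𝕜 F] [CompleteSpace F] {X : E →L[𝕜] F} (c : ℝ)
    (h : ∀ ε : ℝ, 0 < ε → ∃ C : E →L[𝕜] F, IsCompactOperator C ∧ ‖X - C‖ ≤ c * ε) :
    IsCompactOperator X := by
  refine isClosed_setOfPred_isCompactOperator.closure_subset (Metric.mem_closure_iff.2 ?_)
  intro δ hδ
  obtain ⟨C, hC, hXC⟩ := h (δ / (|c| + 1)) (by positivity)
  refine ⟨C, hC, ?_⟩
  calc dist X C ≤ c * (δ / (|c| + 1)) := by rwa [dist_eq_norm]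
    _ ≤ |c| * (δ / (|c| + 1)) := by gcongr; exact le_abs_self c
    _ < δ := by
      rw [mul_div_assoc', div_lt_iff₀ (by positivity)]
      nlinarith

section InnerProductSpace

variable {𝕜 E : Type*} [RCLike 𝕜] [NormedAddCommGroup E] [InnerProductSpace 𝕜 E]

theorem Submodule.isCompactOperator_starProjection (W : Submodule 𝕜 E) [FiniteDimensional 𝕜 W] :
    IsCompactOperator W.starProjection :=
  (isCompactOperator_of_locallyCompactSpace_dom W.orthogonalProjectionOnto).clm_comp W.subtypeL

theorem IsCompactOperator.exists_norm_starProjection_orthogonal_mul_le [CompleteSpace E]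
    {K : E →L[𝕜] E}
    (hK : IsCompactOperator K) {ε : ℝ} (hε : 0 < ε) :
    ∃ W : Submodule 𝕜 E, FiniteDimensional 𝕜 W ∧ ‖Wᗮ.starProjection * K‖ ≤ ε := by
  obtain ⟨Y, hY, hcover⟩ := Metric.totallyBounded_iff.1
    (hK.isCompact_closure_image_closedBall 1).totallyBounded ε hε
  refine ⟨Submodule.span 𝕜 Y, FiniteDimensional.span_of_finite 𝕜 hY,
    opNorm_le_of_unit_norm hε.le fun x hx => ?_⟩
  obtain ⟨y, hyY, hKxy⟩ := Set.mem_iUnion₂.1 <|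
    hcover (subset_closure ⟨x, mem_closedBall_zero_iff.2 hx.le, rfl⟩)
  have hy : (Submodule.span 𝕜 Y)ᗮ.starProjection y = 0 :=
    Submodule.starProjection_orthogonal_apply_eq_zero (Submodule.subset_span hyY)
  calc ‖(Submodule.span 𝕜 Y)ᗮ.starProjection (K x)‖
      = ‖(Submodule.span 𝕜 Y)ᗮ.starProjection (K x - y)‖ := by rw [map_sub, hy, sub_zero]
    _ ≤ ‖K x - y‖ := Submodule.norm_starProjection_apply_le _ _
    _ ≤ ε := (mem_ball_iff_norm.1 hKxy).le

end InnerProductSpace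

section Hilbert

variable {H : Type*} [NormedAddCommGroup H] [InnerProductSpace ℂ H] [CompleteSpace H]

theorem exists_isCompactOperator_norm_sub_le_of_le_add_algebraMap {P K : H →L[ℂ] H}
    (hP : 0 ≤ P) (hK : IsCompactOperator K) {ε : ℝ} (hε : 0 < ε)
    (hPK : P ≤ K + algebraMap ℝ _ ε) :
    ∃ C : H →L[ℂ] H, IsCompactOperator C ∧ ‖P - C‖ ≤ 2 * ε := by
  obtain ⟨W, hW, hWK⟩ := hK.exists_norm_starProjection_orthogonal_mul_le hε
  set p := W.starProjection
  set q := Wᗮ.starProjection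
  have hq : q = 1 - p := W.starProjection_orthogonal'
  have hq_star : star q = q := (isSelfAdjoint_starProjection Wᗮ).star_eq
  have hq_idem : q * q = q := (Submodule.isIdempotentElem_starProjection Wᗮ).eq
  have hq_norm : ‖q‖ ≤ 1 := Wᗮ.starProjection_norm_le
  have hp : IsCompactOperator p := W.isCompactOperator_starProjection
  have hG : 0 ≤ q * P * q := by simpa [hq_star] using star_left_conjugate_nonneg hP q
  have hGle : q * P * q ≤ q * K * q + ε • q := by
    simpa [hq_star, mul_add, add_mul, Algebra.algebraMap_eq_smul_one, hq_idem] using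
      star_left_conjugate_le_conjugate hPK q
  refine ⟨p * P + q * P * p, (hp.comp_clm P).add (hp.clm_comp (q * P)), ?_⟩
  have hPG : P - (p * P + q * P * p) = q * P * q := by rw [hq]; noncomm_ring
  calc ‖P - (p * P + q * P * p)‖ = ‖q * P * q‖ := by rw [hPG]
    _ ≤ ‖q * K * q + ε • q‖ := CStarAlgebra.norm_le_norm_of_nonneg_of_le hG hGle
    _ ≤ ‖q * K‖ * ‖q‖ + ε * ‖q‖ := by
      grw [norm_add_le, norm_mul_le, norm_smul, Real.norm_of_nonneg hε.le]
    _ ≤ ε * 1 + ε * 1 := by gcongr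
    _ = 2 * ε := by ring

theorem isCompactOperator_of_forall_neg_le_of_le_add_smul {X B : H →L[ℂ] H}
    (hB : IsSelfAdjoint B)
    (h : ∀ ε : ℝ, 0 < ε → ∃ K₁ K₂ : H →L[ℂ] H, IsCompactOperator K₁ ∧ IsCompactOperator K₂ ∧
      -(K₁ + ε • B) ≤ X ∧ X ≤ K₂ + ε • B) :
    IsCompactOperator X := by
  refine isCompactOperator_of_forall_exists_norm_sub_le (5 * ‖B‖ + 4) fun ε hε => ?_
  obtain ⟨K₁, K₂, hK₁, hK₂, hlow, hupp⟩ := h ε hε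
  have hP : 0 ≤ X + K₁ + ε • B := by
    rw [add_assoc, ← sub_neg_eq_add]; exact sub_nonneg.2 hlow
  have hPK : X + K₁ + ε • B ≤ (K₁ + K₂) + algebraMap ℝ _ (2 * ε * (‖B‖ + 1)) := by
    have hB_le : B ≤ algebraMap ℝ _ (‖B‖ + 1) :=
      hB.le_algebraMap_norm_self.trans (by gcongr; linarith)
    calc X + K₁ + ε • B ≤ (K₂ + ε • B) + K₁ + ε • B := by gcongr
      _ = (K₁ + K₂) + (2 * ε) • B := by module
      _ ≤ (K₁ + K₂) + (2 * ε) • algebraMap ℝ _ (‖B‖ + 1) := by gcongr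
      _ = (K₁ + K₂) + algebraMap ℝ _ (2 * ε * (‖B‖ + 1)) := by
        rw [map_mul, Algebra.smul_def]
  obtain ⟨C, hC, hPC⟩ := exists_isCompactOperator_norm_sub_le_of_le_add_algebraMap hP
    (hK₁.add hK₂) (by positivity) hPK
  refine ⟨C - K₁, hC.sub hK₁, ?_⟩
  calc ‖X - (C - K₁)‖ = ‖(X + K₁ + ε • B - C) - ε • B‖ := by congr 1; abel
    _ ≤ 2 * (2 * ε * (‖B‖ + 1)) + ε * ‖B‖ := by
      grw [norm_sub_le, hPC, norm_smul, Real.norm_of_nonneg hε.le]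
    _ = (5 * ‖B‖ + 4) * ε := by ring

theorem isCompactOperator_star_mul_mul {S A : H →L[ℂ] H} (hAS : IsCompactOperator (A * S)) :
    IsCompactOperator (star S * A * S) := by
  rw [mul_assoc]; exact hAS.clm_comp (star S)

end Hilbert

/-- Abstract compactness argument behind the Kasparov-cycle property: if a
bounded self-adjoint operator `T` commutes with `S`, and for every `ε > 0`
there are self-adjoint operators `Q, R₁, R₂` with `Q ∘ S`, `R₁`, `R₂` compact
and `−(Q + ε + R₁) ≤ T ≤ Q + ε + R₂`, then `T ∘ S* ∘ S` is compact. -/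
theorem stmt_9
    {H : Type*} [NormedAddCommGroup H] [InnerProductSpace ℂ H] [CompleteSpace H]
    (T S : H →L[ℂ] H)
    (hT : IsSelfAdjoint T)
    (hTS : T.comp S = S.comp T)
    (hyp : ∀ ε : ℝ, 0 < ε → ∃ Q R₁ R₂ : H →L[ℂ] H,
      IsSelfAdjoint Q ∧ IsSelfAdjoint R₁ ∧ IsSelfAdjoint R₂ ∧
      IsCompactOperator (Q.comp S) ∧ IsCompactOperator R₁ ∧ IsCompactOperator R₂ ∧
      (T + (Q + (ε : ℂ) • (1 : H →L[ℂ] H) + R₁)).IsPositive ∧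
      ((Q + (ε : ℂ) • (1 : H →L[ℂ] H) + R₂) - T).IsPositive) :
    IsCompactOperator (T.comp ((ContinuousLinearMap.adjoint S).comp S)) := by
  have hTS_star : star S * T = T * star S := by
    simpa only [star_mul, hT.star_eq] using congrArg star (show T * S = S * T from hTS)
  rw [show T.comp ((adjoint S).comp S) = star S * T * S by
    rw [← star_eq_adjoint, ← mul_def, ← mul_def, hTS_star, mul_assoc]]
  refine isCompactOperator_of_forall_neg_le_of_le_add_smul (.star_mul_self S) fun ε hε => ?_
  obtain ⟨Q, R₁, R₂, -, -, -, hQS, hR₁, hR₂, hpos₁, hpos₂⟩ := hyp ε hε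
  refine ⟨star S * (Q + R₁) * S, star S * (Q + R₂) * S,
    isCompactOperator_star_mul_mul ?_, isCompactOperator_star_mul_mul ?_, ?_, ?_⟩
  · rw [add_mul]; exact hQS.add (hR₁.comp_clm S)
  · rw [add_mul]; exact hQS.add (hR₂.comp_clm S)
  · rw [le_def, ← nonneg_iff_isPositive]
    convert star_left_conjugate_nonneg ((nonneg_iff_isPositive _).2 hpos₁) S using 1
    simp only [mul_add, add_mul, Complex.coe_smul, smul_mul_assoc, mul_smul_comm, mul_one]
    abel
  · rw [le_def, ← nonneg_iff_isPositive]
    convert star_left_conjugate_nonneg ((nonneg_iff_isPositive _).2 hpos₂) S using 1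
    simp only [mul_add, add_mul, mul_sub, sub_mul, Complex.coe_smul, smul_mul_assoc,
      mul_smul_comm, mul_one]
    abel
end

section
/- Let A be a unital C*-algebra and let a, b ∈ A be self-adjoint elements which anticommute: a·b = −b·a. Then: (i) (a+b)² = a² + b²; (ii) the positive element d = 1 + a² + b² is invertible, and setting m = (1+a²)·d⁻¹ and n = (1+b²)·d⁻¹ (positive elements which commute with each other and with a², b²), one has m + n = 1 + d⁻¹; (iii) with the bounded transform Q(x) := x·(1+x²)^{−1/2} (defined via the continuous functional calculus, 1+x² being invertible for self-adjoint x), one has Q(a+b) = m^{1/2}·Q(a) + n^{1/2}·Q(b); and (iv) Q(a+b)·Q(a) + Q(a)·Q(a+b) = 2·m^{1/2}·Q(a)². -/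
/-!
Everything happens in the bicommutant `B` of `{a², b²}`. Anticommutation makes `a²` commute with
`b` and `b²` with `a`, so `a, b` lie in the commutant of `{a², b²}`; hence every element of `B`
commutes with `a` and `b`, and `B` is commutative because `a²` and `b²` commute. Since `B` is a
subsemiring closed under `Ring.inverse` and the continuous functional calculus, it contains
`d⁻¹, m, n`, their square roots and `(1 + a²)^{-1/2}, (1 + b²)^{-1/2}`.

For self-adjoint `x`, the functional calculus gives `Q x = x · sqrt ((1 + x²)⁻¹)`.
As `(a + b)² = a² + b²`, we get
`(1 + (a + b)²)^{-1/2} = d^{-1/2} = m^{1/2} (1 + a²)^{-1/2} = n^{1/2} (1 + b²)^{-1/2}`,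
the square root being multiplicative on commuting positive elements; this gives (iii).
Then (iv) follows because `Q a` commutes with `m^{1/2}, n^{1/2}` and anticommutes with `Q b`.
-/

open scoped Ring

section NoncommRing

variable {R : Type*} [Ring R] {a b : R}

theorem Commute.sq_left_of_mul_eq_neg (h : a * b = -(b * a)) : Commute (a ^ 2) b := by
  rw [Commute, SemiconjBy, sq, mul_assoc, h, mul_neg, ← mul_assoc, h, neg_mul, neg_neg, mul_assoc]

theorem add_sq_of_mul_eq_neg (h : a * b = -(b * a)) : (a + b) ^ 2 = a ^ 2 + b ^ 2 := by
  rw [sq, sq, sq, add_mul, mul_add, mul_add, h]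
  abel

theorem mul_add_mul_eq_zero_of_mul_eq_neg {s t : R} (h : a * b = -(b * a)) (hat : Commute a t)
    (hsb : Commute s b) (hst : Commute s t) : b * t * (a * s) + a * s * (b * t) = 0 := by
  rw [hat.symm.mul_mul_mul_comm, hsb.mul_mul_mul_comm, h, hst.eq, neg_mul, add_neg_cancel]

theorem add_mul_add_mul_add_eq_two_mul {p q x y : R} (hp : Commute x p) (hq : Commute x q)
    (hxy : y * x + x * y = 0) :
    (p * x + q * y) * x + x * (p * x + q * y) = 2 * (p * x ^ 2) := by
  rw [add_mul, mul_add, ← mul_assoc x p, ← mul_assoc x q, hp.eq, hq.eq]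
  calc p * x * x + q * y * x + (p * x * x + q * x * y)
      = 2 * (p * x ^ 2) + q * (y * x + x * y) := by noncomm_ring
    _ = 2 * (p * x ^ 2) := by rw [hxy, mul_zero, add_zero]

theorem one_add_mul_inverse_add_one_add_mul_inverse {p q : R} (h : IsUnit (1 + p + q)) :
    (1 + p) * (1 + p + q)⁻¹ʳ + (1 + q) * (1 + p + q)⁻¹ʳ = 1 + (1 + p + q)⁻¹ʳ := by
  rw [← add_mul, show 1 + p + (1 + q) = 1 + (1 + p + q) by abel, add_mul, one_mul,
    Ring.mul_inverse_cancel _ h, add_comm]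

end NoncommRing

theorem Commute.ringInverse_right {M₀ : Type*} [MonoidWithZero M₀] {a b : M₀} (h : Commute a b) :
    Commute a b⁻¹ʳ := by
  by_cases hb : IsUnit b
  · obtain ⟨u, rfl⟩ := hb
    simpa only [Ring.inverse_unit] using h.units_inv_right
  · simp only [Ring.inverse_non_unit _ hb, Commute.zero_right]

theorem Set.ringInverse_mem_centralizer {M₀ : Type*} [MonoidWithZero M₀] {s : Set M₀} {x : M₀}
    (hx : x ∈ s.centralizer) : x⁻¹ʳ ∈ s.centralizer :=
  fun y hy => Commute.ringInverse_right (hx y hy)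

section SqBicommutant

variable {R : Type*} [Semiring R]

def sqBicommutant (a b : R) : Subsemiring R :=
  Subsemiring.centralizer (Set.centralizer {a ^ 2, b ^ 2})

theorem sqBicommutant_comm (a b : R) : sqBicommutant a b = sqBicommutant b a := by
  rw [sqBicommutant, sqBicommutant, Set.pair_comm]

theorem sq_mem_sqBicommutant_left (a b : R) : a ^ 2 ∈ sqBicommutant a b :=
  Set.subset_centralizer_centralizer (Set.mem_insert _ _)

theorem sq_mem_sqBicommutant_right (a b : R) : b ^ 2 ∈ sqBicommutant a b :=
  sqBicommutant_comm a b ▸ sq_mem_sqBicommutant_left b a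

theorem one_add_sq_mem_sqBicommutant (a b : R) : 1 + a ^ 2 ∈ sqBicommutant a b :=
  add_mem (one_mem _) (sq_mem_sqBicommutant_left a b)

theorem one_add_sq_add_sq_mem_sqBicommutant (a b : R) :
    1 + a ^ 2 + b ^ 2 ∈ sqBicommutant a b :=
  add_mem (one_add_sq_mem_sqBicommutant a b) (sq_mem_sqBicommutant_right a b)

theorem inverse_one_add_sq_add_sq_mem_sqBicommutant (a b : R) :
    (1 + a ^ 2 + b ^ 2)⁻¹ʳ ∈ sqBicommutant a b :=
  Set.ringInverse_mem_centralizer (one_add_sq_add_sq_mem_sqBicommutant a b)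

theorem one_add_sq_mul_inverse_mem_sqBicommutant (a b : R) :
    (1 + a ^ 2) * (1 + a ^ 2 + b ^ 2)⁻¹ʳ ∈ sqBicommutant a b :=
  mul_mem (one_add_sq_mem_sqBicommutant a b) (inverse_one_add_sq_add_sq_mem_sqBicommutant a b)

end SqBicommutant

section SqBicommutantAnticommuting

variable {R : Type*} [Ring R] {a b x y : R}

theorem commute_of_mem_sqBicommutant (h : a * b = -(b * a)) (hx : x ∈ sqBicommutant a b)
    (hy : y ∈ sqBicommutant a b) : Commute x y := by
  refine Set.centralizer_centralizer_comm_of_comm ?_ x hx y hy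
  have hab := (Commute.sq_left_of_mul_eq_neg h).pow_right 2
  rintro x (rfl | rfl) y (rfl | rfl)
  exacts [rfl, hab.eq, hab.symm.eq, rfl]

theorem commute_of_mem_sqBicommutant_left (h : a * b = -(b * a)) (hx : x ∈ sqBicommutant a b) :
    Commute a x := by
  refine hx a ?_
  rintro y (rfl | rfl)
  exacts [(Commute.refl a).pow_left 2, Commute.sq_left_of_mul_eq_neg (by rw [h, neg_neg])]

theorem commute_of_mem_sqBicommutant_right (h : a * b = -(b * a)) (hx : x ∈ sqBicommutant a b) :
    Commute b x :=
  commute_of_mem_sqBicommutant_left (by rw [h, neg_neg]) (sqBicommutant_comm a b ▸ hx)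

end SqBicommutantAnticommuting

section CStarAlgebra

variable {A : Type*} [CStarAlgebra A]

noncomputable def boundedTransform (x : A) : A :=
  x * cfc (fun t : ℝ => (√(1 + t ^ 2))⁻¹) x

theorem IsSelfAdjoint.cfc_one_add_sq {x : A} (hx : IsSelfAdjoint x) :
    cfc (fun t : ℝ => 1 + t ^ 2) x = 1 + x ^ 2 := by
  rw [cfc_const_add .., cfc_pow_id .., Algebra.algebraMap_eq_smul_one, one_smul]

variable [PartialOrder A] [StarOrderedRing A]

theorem IsSelfAdjoint.cfc_inv_sqrt_one_add_sq {x : A} (hx : IsSelfAdjoint x) :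
    cfc (fun t : ℝ => (√(1 + t ^ 2))⁻¹) x = CFC.sqrt (1 + x ^ 2)⁻¹ʳ := by
  refine (CFC.sqrt_unique ?_ (cfc_nonneg fun t _ => by positivity)).symm
  have hcont : Continuous fun t : ℝ => (√(1 + t ^ 2))⁻¹ :=
    (by fun_prop : Continuous fun t : ℝ => √(1 + t ^ 2)).inv₀ fun t => by positivity
  rw [← cfc_mul _ _ x hcont.continuousOn hcont.continuousOn, ← hx.cfc_one_add_sq,
    ← cfc_inv _ _ fun t _ => by positivity]
  refine cfc_congr fun t _ => ?_
  rw [← mul_inv, Real.mul_self_sqrt (by positivity)]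

theorem IsSelfAdjoint.boundedTransform_eq {x : A} (hx : IsSelfAdjoint x) :
    boundedTransform x = x * CFC.sqrt (1 + x ^ 2)⁻¹ʳ := by
  rw [boundedTransform, hx.cfc_inv_sqrt_one_add_sq]

theorem cfc_real_sqrt_eq_cfcSqrt {x : A} (hx : 0 ≤ x) : cfc Real.sqrt x = CFC.sqrt x := by
  rw [CFC.sqrt_eq_real_sqrt x hx, cfcₙ_eq_cfc]

theorem Commute.cfcSqrt_left {x y : A} (h : Commute x y) : Commute (CFC.sqrt x) y := by
  rw [CFC.sqrt_eq_cfc]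
  exact h.cfc_nnreal _

theorem Set.cfcSqrt_mem_centralizer {s : Set A} {x : A} (hx : x ∈ s.centralizer) :
    CFC.sqrt x ∈ s.centralizer :=
  fun y hy => (Commute.cfcSqrt_left (hx y hy).symm).symm

theorem CFC.sqrt_mul_of_commute {x y : A} (hx : 0 ≤ x) (hy : 0 ≤ y) (h : Commute x y) :
    CFC.sqrt (x * y) = CFC.sqrt x * CFC.sqrt y := by
  have hsqrt : Commute (CFC.sqrt x) (CFC.sqrt y) := (h.cfcSqrt_left.symm.cfcSqrt_left).symm
  refine CFC.sqrt_unique ?_ (hsqrt.mul_nonneg (CFC.sqrt_nonneg x) (CFC.sqrt_nonneg y))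
  rw [hsqrt.symm.mul_mul_mul_comm, CFC.sqrt_mul_sqrt_self x, CFC.sqrt_mul_sqrt_self y]

theorem cfcSqrt_ringInverse_eq_mul {u d : A} (hu : IsStrictlyPositive u)
    (hd : IsStrictlyPositive d) (h : Commute u d) :
    CFC.sqrt d⁻¹ʳ = CFC.sqrt (u * d⁻¹ʳ) * CFC.sqrt u⁻¹ʳ := by
  have hud : Commute u d⁻¹ʳ := h.ringInverse_right
  rw [← CFC.sqrt_mul_of_commute (hud.mul_nonneg hu.nonneg hd.ringInverse.nonneg)
      hu.ringInverse.nonneg ((Commute.refl u).ringInverse_right.mul_left ?_),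
    hud.eq, Ring.mul_inverse_cancel_right _ _ hu.isUnit]
  exact h.ringInverse_ringInverse.symm

end CStarAlgebra

section AnticommutingSelfAdjoint

variable {A : Type*} [CStarAlgebra A] [PartialOrder A] [StarOrderedRing A] {a b : A}

theorem IsSelfAdjoint.isStrictlyPositive_one_add_sq_add_sq (ha : IsSelfAdjoint a)
    (hb : IsSelfAdjoint b) : IsStrictlyPositive (1 + a ^ 2 + b ^ 2) :=
  (isStrictlyPositive_one.add_nonneg ha.sq_nonneg).add_nonneg hb.sq_nonneg

theorem cfcSqrt_inverse_one_add_sq_mem_sqBicommutant (a b : A) :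
    CFC.sqrt (1 + a ^ 2)⁻¹ʳ ∈ sqBicommutant a b :=
  Set.cfcSqrt_mem_centralizer (Set.ringInverse_mem_centralizer (one_add_sq_mem_sqBicommutant a b))

theorem one_add_sq_mul_inverse_nonneg (ha : IsSelfAdjoint a) (hb : IsSelfAdjoint b)
    (hab : a * b = -(b * a)) : 0 ≤ (1 + a ^ 2) * (1 + a ^ 2 + b ^ 2)⁻¹ʳ :=
  Commute.mul_nonneg (add_nonneg zero_le_one ha.sq_nonneg)
    (ha.isStrictlyPositive_one_add_sq_add_sq hb).ringInverse.nonneg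
    (commute_of_mem_sqBicommutant hab (one_add_sq_mem_sqBicommutant a b)
      (inverse_one_add_sq_add_sq_mem_sqBicommutant a b))

theorem mul_cfcSqrt_inverse_one_add_sq_add_sq (ha : IsSelfAdjoint a) (hb : IsSelfAdjoint b)
    (hab : a * b = -(b * a)) :
    a * CFC.sqrt (1 + a ^ 2 + b ^ 2)⁻¹ʳ =
      CFC.sqrt ((1 + a ^ 2) * (1 + a ^ 2 + b ^ 2)⁻¹ʳ) * boundedTransform a := by
  rw [cfcSqrt_ringInverse_eq_mul (isStrictlyPositive_one.add_nonneg ha.sq_nonneg)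
    (ha.isStrictlyPositive_one_add_sq_add_sq hb) (commute_of_mem_sqBicommutant hab
      (one_add_sq_mem_sqBicommutant a b) (one_add_sq_add_sq_mem_sqBicommutant a b)),
    ← mul_assoc, (commute_of_mem_sqBicommutant_left hab (Set.cfcSqrt_mem_centralizer
      (one_add_sq_mul_inverse_mem_sqBicommutant a b))).eq, mul_assoc, ha.boundedTransform_eq]

theorem boundedTransform_add (ha : IsSelfAdjoint a) (hb : IsSelfAdjoint b)
    (hab : a * b = -(b * a)) :
    boundedTransform (a + b) =
      CFC.sqrt ((1 + a ^ 2) * (1 + a ^ 2 + b ^ 2)⁻¹ʳ) * boundedTransform a +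
        CFC.sqrt ((1 + b ^ 2) * (1 + a ^ 2 + b ^ 2)⁻¹ʳ) * boundedTransform b := by
  have hb_term := mul_cfcSqrt_inverse_one_add_sq_add_sq hb ha (by rw [hab, neg_neg])
  rw [add_right_comm 1 (b ^ 2) (a ^ 2)] at hb_term
  rw [(ha.add hb).boundedTransform_eq, add_sq_of_mul_eq_neg hab, ← add_assoc, add_mul,
    mul_cfcSqrt_inverse_one_add_sq_add_sq ha hb hab, hb_term]

theorem commute_boundedTransform_of_mem_sqBicommutant (ha : IsSelfAdjoint a)
    (hab : a * b = -(b * a)) {x : A} (hx : x ∈ sqBicommutant a b) :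
    Commute (boundedTransform a) x := by
  rw [ha.boundedTransform_eq]
  exact (commute_of_mem_sqBicommutant_left hab hx).mul_left
    (commute_of_mem_sqBicommutant hab (cfcSqrt_inverse_one_add_sq_mem_sqBicommutant a b) hx)

theorem boundedTransform_mul_add_mul_eq_zero (ha : IsSelfAdjoint a) (hb : IsSelfAdjoint b)
    (hab : a * b = -(b * a)) :
    boundedTransform b * boundedTransform a + boundedTransform a * boundedTransform b = 0 := by
  have hsa := cfcSqrt_inverse_one_add_sq_mem_sqBicommutant a b
  have hsb := sqBicommutant_comm a b ▸ cfcSqrt_inverse_one_add_sq_mem_sqBicommutant b a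
  rw [ha.boundedTransform_eq, hb.boundedTransform_eq]
  exact mul_add_mul_eq_zero_of_mul_eq_neg hab (commute_of_mem_sqBicommutant_left hab hsb)
    (commute_of_mem_sqBicommutant_right hab hsa).symm (commute_of_mem_sqBicommutant hab hsa hsb)

end AnticommutingSelfAdjoint

/-- Algebraic identities for the bounded (Woronowicz) transform
`Q(x) = x (1 + x²)^{−1/2}` of anticommuting self-adjoint elements `a, b` of a
unital C*-algebra: `(a+b)² = a² + b²`; `d = 1 + a² + b²` is positive and
invertible; `m = (1+a²)d⁻¹` and `n = (1+b²)d⁻¹` are positive, commute with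
each other and with `a², b²`, and satisfy `m + n = 1 + d⁻¹`;
`Q(a+b) = m^{1/2} Q(a) + n^{1/2} Q(b)`; and
`Q(a+b)Q(a) + Q(a)Q(a+b) = 2 m^{1/2} Q(a)²`. -/
theorem stmt_12
    {A : Type*} [CStarAlgebra A] [PartialOrder A] [StarOrderedRing A]
    (a b : A) (ha : IsSelfAdjoint a) (hb : IsSelfAdjoint b)
    (hab : a * b = -(b * a))
    (Q : A → A)
    (hQ : ∀ x : A, Q x = x * cfc (fun t : ℝ => (Real.sqrt (1 + t ^ 2))⁻¹) x)
    (m n : A)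
    (hm : m = (1 + a ^ 2) * Ring.inverse (1 + a ^ 2 + b ^ 2))
    (hn : n = (1 + b ^ 2) * Ring.inverse (1 + a ^ 2 + b ^ 2)) :
    (a + b) ^ 2 = a ^ 2 + b ^ 2 ∧
    0 ≤ 1 + a ^ 2 + b ^ 2 ∧
    IsUnit (1 + a ^ 2 + b ^ 2) ∧
    0 ≤ m ∧ 0 ≤ n ∧
    Commute m n ∧
    Commute m (a ^ 2) ∧ Commute m (b ^ 2) ∧
    Commute n (a ^ 2) ∧ Commute n (b ^ 2) ∧
    m + n = 1 + Ring.inverse (1 + a ^ 2 + b ^ 2) ∧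
    Q (a + b) = cfc Real.sqrt m * Q a + cfc Real.sqrt n * Q b ∧
    Q (a + b) * Q a + Q a * Q (a + b) = 2 * (cfc Real.sqrt m * Q a ^ 2) := by
  obtain rfl : Q = boundedTransform := funext hQ
  subst hm hn
  have hd := ha.isStrictlyPositive_one_add_sq_add_sq hb
  have hm0 := one_add_sq_mul_inverse_nonneg ha hb hab
  have hn0 : 0 ≤ (1 + b ^ 2) * (1 + a ^ 2 + b ^ 2)⁻¹ʳ := by
    rw [add_right_comm (1 : A) (a ^ 2)]
    exact one_add_sq_mul_inverse_nonneg hb ha (by rw [hab, neg_neg])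
  have hmB := one_add_sq_mul_inverse_mem_sqBicommutant a b
  have hnB : (1 + b ^ 2) * (1 + a ^ 2 + b ^ 2)⁻¹ʳ ∈ sqBicommutant a b := by
    rw [add_right_comm (1 : A) (a ^ 2), sqBicommutant_comm]
    exact one_add_sq_mul_inverse_mem_sqBicommutant b a
  have ha2 := sq_mem_sqBicommutant_left a b
  have hb2 := sq_mem_sqBicommutant_right a b
  rw [cfc_real_sqrt_eq_cfcSqrt hm0, cfc_real_sqrt_eq_cfcSqrt hn0, boundedTransform_add ha hb hab]
  refine ⟨add_sq_of_mul_eq_neg hab, hd.nonneg, hd.isUnit, hm0, hn0,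
    commute_of_mem_sqBicommutant hab hmB hnB, commute_of_mem_sqBicommutant hab hmB ha2,
    commute_of_mem_sqBicommutant hab hmB hb2, commute_of_mem_sqBicommutant hab hnB ha2,
    commute_of_mem_sqBicommutant hab hnB hb2,
    one_add_mul_inverse_add_one_add_mul_inverse hd.isUnit, rfl, ?_⟩
  exact add_mul_add_mul_add_eq_two_mul
    (commute_boundedTransform_of_mem_sqBicommutant ha hab (Set.cfcSqrt_mem_centralizer hmB))
    (commute_boundedTransform_of_mem_sqBicommutant ha hab (Set.cfcSqrt_mem_centralizer hnB))
    (boundedTransform_mul_add_mul_eq_zero ha hb hab)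
end
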